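/- arXiv:math/0501535 — 2 statements merged into one kernel-verified Lean document; each statement's English description precedes it below -/
import Mathlib

section
/- Fix n ≥ 1. Let O_X = O_amb/(f_1, ..., f_n), which is an integral domain, let K(X) be its field of fractions, and let φ : O_amb[T_2, ..., T_{n+1}] → K(X) be the ring homomorphism which restricted to O_amb is the natural projection to O_X followed by the inclusion O_X ⊆ K(X), and which sends φ(T_i) = z̄_i/z̄_1 for 2 ≤ i ≤ n+1 (where z̄_j denotes the image of z_j in O_X, and z̄_1 ≠ 0). Then ker φ = (z_i − z_1 T_i for 2 ≤ i ≤ n+1, a_{j1} + Σ_{k=2}^{n+1} a_{jk} T_k for 1 ≤ j ≤ n) as ideals of O_amb[T_2, ..., T_{n+1}]. -/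
open MvPolynomial

/-- The ambient polynomial ring `O_amb = ℤ[a_{ij}, z_j]`, `1 ≤ i ≤ n`, `1 ≤ j ≤ n+1`. -/
noncomputable abbrev Oamb (n : ℕ) : Type := MvPolynomial ((Fin n × Fin (n+1)) ⊕ Fin (n+1)) ℤ

/-- The generic matrix entry `a_{ij}` as an element of `O_amb`. -/
noncomputable def av {n : ℕ} (i : Fin n) (j : Fin (n+1)) : Oamb n := X (Sum.inl (i, j))

/-- The variable `z_j` as an element of `O_amb`. -/
noncomputable def zv {n : ℕ} (j : Fin (n+1)) : Oamb n := X (Sum.inr j)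

/-- The generic linear form `f_i = Σ_j a_{ij} z_j`. -/
noncomputable def fv {n : ℕ} (i : Fin n) : Oamb n := ∑ j, av i j * zv j

/-- `Δ₁`: the determinant of the `n × n` submatrix of `(a_{ij})` obtained by deleting the
first column. -/
noncomputable def Δ₁ (n : ℕ) : Oamb n := Matrix.det (Matrix.of fun i j : Fin n => av i j.succ)
set_option maxHeartbeats 1000000
set_option synthInstance.maxHeartbeats 400000

namespace KerPhiAux
variable (n : ℕ)

abbrev Sig0 (n : ℕ) := (Fin n × Fin n) ⊕ Unit
abbrev R0 (n : ℕ) := MvPolynomial (Sig0 n) ℤ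
abbrev SS (n : ℕ) := MvPolynomial (Fin n) (Oamb n)
abbrev SS0 (n : ℕ) := MvPolynomial (Fin n) (R0 n)
noncomputable abbrev Ifv (n : ℕ) : Ideal (Oamb n) := Ideal.span (Set.range (fun i : Fin n => fv i))
abbrev QX (n : ℕ) := Oamb n ⧸ Ifv n
abbrev KX (n : ℕ) := FractionRing (QX n)
abbrev LL (n : ℕ) := FractionRing (Oamb n)

def emb : Sig0 n → (Fin n × Fin (n+1)) ⊕ Fin (n+1) :=
  Sum.elim (fun jk => Sum.inl (jk.1, jk.2.succ)) (fun _ => Sum.inr 0)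

noncomputable def ren : R0 n →+* Oamb n := (rename (emb n)).toRingHom
noncomputable def inc : SS0 n →+* SS n := MvPolynomial.map (ren n)

noncomputable def alv (j k : Fin n) : R0 n := X (Sum.inl (j, k))
noncomputable def ze : R0 n := X (Sum.inr ())

noncomputable def c0 : ((Fin n × Fin (n+1)) ⊕ Fin (n+1)) → SS0 n :=
  Sum.elim
    (fun jk => Fin.cases (-(∑ k : Fin n, C (alv n jk.1 k) * X k)) (fun k => C (alv n jk.1 k)) jk.2)
    (fun j => Fin.cases (C (ze n)) (fun k => C (ze n) * X k) j)

noncomputable def chiHat : SS n →+* SS0 n :=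
  eval₂Hom (eval₂Hom (Int.castRingHom (SS0 n)) (c0 n)) X

noncomputable def chi : SS n →+* SS n := (inc n).comp (chiHat n)

@[simp] lemma ren_al (j k : Fin n) : ren n (alv n j k) = av j k.succ := by
  simp [ren, alv, av, emb]

@[simp] lemma ren_ze : ren n (ze n) = zv 0 := by simp [ren, ze, zv, emb]

@[simp] lemma chi_X (k : Fin n) : chi n (X k) = X k := by
  simp [chi, chiHat, inc]

@[simp] lemma chi_C_a0 (j : Fin n) : chi n (C (av j 0)) = -(∑ k : Fin n, C (av j k.succ) * X k) := by
  simp [chi, chiHat, inc, c0, av]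

@[simp] lemma chi_C_asucc (j k : Fin n) : chi n (C (av j k.succ)) = C (av j k.succ) := by
  simp [chi, chiHat, inc, c0, av]

@[simp] lemma chi_C_z0 : chi n (C (zv 0)) = C (zv 0) := by
  simp [chi, chiHat, inc, c0, zv]

@[simp] lemma chi_C_zsucc (k : Fin n) : chi n (C (zv k.succ)) = C (zv 0) * X k := by
  simp [chi, chiHat, inc, c0, zv]

noncomputable def gH : SS0 n →+* Oamb n := eval₂Hom (ren n) (fun k => zv k.succ)

noncomputable def hH : Oamb n →+* SS0 n :=
  eval₂Hom (Int.castRingHom (SS0 n))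
    (Sum.elim (fun jk => Fin.cases 0 (fun k => C (alv n jk.1 k)) jk.2)
      (fun j => Fin.cases (C (ze n)) (fun k => X k) j))

lemma hH_gH : (hH n).comp (gH n) = RingHom.id (SS0 n) := by
  refine MvPolynomial.ringHom_ext' (MvPolynomial.ringHom_ext' (RingHom.ext_int _ _) ?_) ?_
  · rintro (⟨j, k⟩ | ⟨⟩) <;> simp [gH, hH, ren, emb, alv, ze, av, zv]
  · intro k; simp [gH, hH, zv]

noncomputable def rho : Oamb n →+* LL n := algebraMap _ _

noncomputable def eH : Oamb n →+* LL n :=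
  eval₂Hom (Int.castRingHom (LL n))
    (Sum.elim
      (fun jk => Fin.cases
        (-(∑ k : Fin n, rho n (av jk.1 k.succ * zv k.succ)) * (rho n (zv 0))⁻¹)
        (fun k => rho n (av jk.1 k.succ)) jk.2)
      (fun j => rho n (zv j)))

lemma rho_inj : Function.Injective (rho n) := IsFractionRing.injective _ _

lemma rho_z0_ne : rho n (zv 0) ≠ 0 := by
  intro h
  exact X_ne_zero _ (rho_inj n (by simpa [zv] using h))

lemma eH_fv (i : Fin n) : eH n (fv i) = 0 := by
  have h0 : eH n (av i 0) = -(∑ k : Fin n, rho n (av i k.succ * zv k.succ)) * (rho n (zv 0))⁻¹ := by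
    simp [eH, av]
  have h1 : ∀ k : Fin n, eH n (av i k.succ) = rho n (av i k.succ) := by
    intro k; simp [eH, av]
  have h2 : ∀ j : Fin (n+1), eH n (zv j) = rho n (zv j) := by
    intro j; simp [eH, zv]
  rw [fv, Fin.sum_univ_succ, map_add, map_mul, map_sum, h0, h2]
  simp only [map_mul, h1, h2]
  rw [mul_assoc, inv_mul_cancel₀ (rho_z0_ne n), mul_one]
  simp [map_mul]

lemma eH_I : Ifv n ≤ RingHom.ker (eH n) := by
  rw [Ideal.span_le]
  rintro x ⟨i, rfl⟩
  simpa [RingHom.mem_ker] using eH_fv n i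

lemma eH_gH : (eH n).comp (gH n) = (rho n).comp (gH n) := by
  refine MvPolynomial.ringHom_ext' (MvPolynomial.ringHom_ext' (RingHom.ext_int _ _) ?_) ?_
  · rintro (⟨j, k⟩ | ⟨⟩) <;> simp [gH, eH, ren, emb, alv, ze, av, zv]
  · intro k; simp [gH, eH, zv]


section WithDomain
variable [IsDomain (QX n)]

noncomputable def piK : Oamb n →+* KX n :=
  (algebraMap (QX n) (KX n)).comp (Ideal.Quotient.mk (Ifv n))

noncomputable def Phi : SS n →+* KX n :=
  eval₂Hom (piK n)
    (fun k => algebraMap (QX n) (KX n) (Ideal.Quotient.mk (Ifv n) (zv k.succ)) /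
              algebraMap (QX n) (KX n) (Ideal.Quotient.mk (Ifv n) (zv 0)))

@[simp] lemma Phi_C (r : Oamb n) : Phi n (C r) = piK n r := by simp [Phi]

@[simp] lemma Phi_X (k : Fin n) : Phi n (X k) = piK n (zv k.succ) / piK n (zv 0) := by
  simp [Phi, piK]

noncomputable def evz : Oamb n →+* ℤ :=
  eval₂Hom (RingHom.id ℤ) (Sum.elim (fun _ => 0) (fun _ => 1))

lemma z0bar_ne : piK n (zv 0) ≠ 0 := by
  intro h
  have hmem : zv 0 ∈ Ifv n := by
    rw [← Ideal.Quotient.eq_zero_iff_mem]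
    exact IsFractionRing.injective (QX n) (KX n) (by simpa [piK] using h)
  have hker : Ifv n ≤ RingHom.ker (evz n) := by
    rw [Ideal.span_le]
    rintro x ⟨i, rfl⟩
    simp [RingHom.mem_ker, evz, fv, av, zv]
  have h1 : evz n (zv 0) = 1 := by simp [evz, zv]
  have h0 : evz n (zv 0) = 0 := hker hmem
  omega

lemma piK_fv (j : Fin n) : piK n (fv j) = 0 := by
  have : fv j ∈ Ifv n := Ideal.subset_span ⟨j, rfl⟩
  simp [piK, Ideal.Quotient.eq_zero_iff_mem.mpr this]

lemma rel (j : Fin n) :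
    piK n (av j 0) * piK n (zv 0) + ∑ k : Fin n, piK n (av j k.succ) * piK n (zv k.succ) = 0 := by
  have := piK_fv n j
  rw [fv, map_sum, Fin.sum_univ_succ] at this
  simpa [map_mul] using this

lemma Phi_sum (j : Fin n) :
    Phi n (∑ k : Fin n, C (av j k.succ) * X k) = - piK n (av j 0) := by
  have hz := z0bar_ne n
  rw [map_sum]
  have h : ∀ k : Fin n, Phi n (C (av j k.succ) * X k)
      = piK n (av j k.succ) * piK n (zv k.succ) / piK n (zv 0) := by
    intro k; rw [map_mul, Phi_C, Phi_X, mul_div_assoc]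
  rw [Finset.sum_congr rfl fun k _ => h k, ← Finset.sum_div, div_eq_iff hz]
  linear_combination rel n j

lemma Phi_second (j : Fin n) :
    Phi n (C (av j 0) + ∑ k : Fin n, C (av j k.succ) * X k) = 0 := by
  rw [map_add, Phi_C, Phi_sum, add_neg_cancel]

lemma Phi_first (i : Fin n) : Phi n (C (zv i.succ) - C (zv 0) * X i) = 0 := by
  rw [map_sub, map_mul, Phi_C, Phi_C, Phi_X]
  rw [mul_comm, div_mul_cancel₀ _ (z0bar_ne n), sub_self]

lemma Phi_chi : (Phi n).comp (chi n) = Phi n := by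
  refine MvPolynomial.ringHom_ext' (MvPolynomial.ringHom_ext' (RingHom.ext_int _ _) ?_) ?_
  · rintro (⟨j, k⟩ | j)
    · refine Fin.cases ?_ (fun k' => ?_) k
      · show Phi n (chi n (C (av j 0))) = Phi n (C (av j 0))
        rw [chi_C_a0, map_neg, Phi_sum, neg_neg, Phi_C]
      · show Phi n (chi n (C (av j k'.succ))) = Phi n (C (av j k'.succ))
        rw [chi_C_asucc]
    · refine Fin.cases ?_ (fun k' => ?_) j
      · show Phi n (chi n (C (zv 0))) = Phi n (C (zv 0))
        rw [chi_C_z0]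
      · show Phi n (chi n (C (zv k'.succ))) = Phi n (C (zv k'.succ))
        rw [chi_C_zsucc, map_mul, Phi_C, Phi_X, mul_comm, div_mul_cancel₀ _ (z0bar_ne n), Phi_C]
  · intro k
    rw [RingHom.comp_apply, chi_X]


end WithDomain

noncomputable abbrev Jid (n : ℕ) : Ideal (SS n) :=
  Ideal.span
    ((Set.range fun i : Fin n => (C (zv i.succ) - C (zv 0) * X i : SS n)) ∪
     (Set.range fun j : Fin n => (C (av j 0) + ∑ k : Fin n, C (av j k.succ) * X k : SS n)))

lemma mkJ_chi : (Ideal.Quotient.mk (Jid n)).comp (chi n) = Ideal.Quotient.mk (Jid n) := by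
  refine MvPolynomial.ringHom_ext' (MvPolynomial.ringHom_ext' (RingHom.ext_int _ _) ?_) ?_
  · rintro (⟨j, k⟩ | j)
    · refine Fin.cases ?_ (fun k' => ?_) k
      · show Ideal.Quotient.mk (Jid n) (chi n (C (av j 0))) = Ideal.Quotient.mk (Jid n) (C (av j 0))
        rw [chi_C_a0, Ideal.Quotient.eq]
        have : (C (av j 0) + ∑ k : Fin n, C (av j k.succ) * X k : SS n) ∈ Jid n :=
          Ideal.subset_span (Set.mem_union_right _ ⟨j, rfl⟩)
        have h2 : -(∑ k : Fin n, (C (av j k.succ) * X k : SS n)) - C (av j 0)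
            = -(C (av j 0) + ∑ k : Fin n, C (av j k.succ) * X k) := by ring
        rw [h2]
        exact neg_mem this
      · show Ideal.Quotient.mk (Jid n) (chi n (C (av j k'.succ)))
            = Ideal.Quotient.mk (Jid n) (C (av j k'.succ))
        rw [chi_C_asucc]
    · refine Fin.cases ?_ (fun k' => ?_) j
      · show Ideal.Quotient.mk (Jid n) (chi n (C (zv 0))) = Ideal.Quotient.mk (Jid n) (C (zv 0))
        rw [chi_C_z0]
      · show Ideal.Quotient.mk (Jid n) (chi n (C (zv k'.succ)))
            = Ideal.Quotient.mk (Jid n) (C (zv k'.succ))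
        rw [chi_C_zsucc, Ideal.Quotient.eq]
        have : (C (zv k'.succ) - C (zv 0) * X k' : SS n) ∈ Jid n :=
          Ideal.subset_span (Set.mem_union_left _ ⟨k', rfl⟩)
        have h2 : (C (zv 0) * X k' - C (zv k'.succ) : SS n)
            = -(C (zv k'.succ) - C (zv 0) * X k') := by ring
        rw [h2]
        exact neg_mem this
  · intro k
    rw [RingHom.comp_apply, chi_X]

lemma sub_chi_mem (p : SS n) : p - chi n p ∈ Jid n := by
  have := RingHom.congr_fun (mkJ_chi n) p
  rw [RingHom.comp_apply] at this
  exact Ideal.Quotient.eq.mp this.symm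

section WithDomain2
variable [IsDomain (QX n)]

lemma J_le_ker : Jid n ≤ RingHom.ker (Phi n) := by
  rw [Ideal.span_le]
  rintro x (⟨i, rfl⟩ | ⟨j, rfl⟩)
  · simpa [RingHom.mem_ker] using Phi_first n i
  · simpa [RingHom.mem_ker] using Phi_second n j

end WithDomain2

section Crux
variable [IsDomain (QX n)]

lemma keyH (s : SS0 n) (d : ℕ) (hs : s.IsHomogeneous d) :
    piK n (gH n s) = (piK n (zv 0))^d * Phi n (inc n s) := by
  conv_lhs => rw [← support_sum_monomial_coeff s]
  conv_rhs => rw [← support_sum_monomial_coeff s]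
  rw [map_sum, map_sum, map_sum, map_sum, Finset.mul_sum]
  refine Finset.sum_congr rfl fun m hm => ?_
  have hd : (∑ i ∈ m.support, m i) = d := by
    have := hs (mem_support_iff.mp hm)
    simpa [Finsupp.weight, Finsupp.degree, Finsupp.linearCombination, Finsupp.sum] using this
  rw [inc, MvPolynomial.map_monomial]
  rw [gH, Phi, coe_eval₂Hom, coe_eval₂Hom, eval₂_monomial, eval₂_monomial]
  rw [map_mul]
  simp only [Finsupp.prod, map_prod, map_pow]
  rw [show (∏ k ∈ m.support,
        (algebraMap (QX n) (KX n) (Ideal.Quotient.mk (Ifv n) (zv k.succ)) /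
          algebraMap (QX n) (KX n) (Ideal.Quotient.mk (Ifv n) (zv 0))) ^ m k)
      = (∏ k ∈ m.support, piK n (zv k.succ) ^ m k) / (piK n (zv 0))^d by
    rw [← hd, ← Finset.prod_pow_eq_pow_sum, ← Finset.prod_div_distrib]
    refine Finset.prod_congr rfl fun k _ => ?_
    rw [div_pow]; rfl]
  have hz := z0bar_ne n
  field_simp

lemma chi_eq_zero (p : SS n) (hp : Phi n p = 0) : chi n p = 0 := by
  set qh := chiHat n p with hqh
  set D := qh.totalDegree with hD
  set qt : SS0 n := ∑ d ∈ Finset.range (D+1), (C (ze n))^(D - d) * homogeneousComponent d qh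
    with hqt
  have hsum : piK n (gH n qt) = (piK n (zv 0))^D * Phi n p := by
    rw [hqt, map_sum, map_sum]
    have hterm : ∀ d ∈ Finset.range (D+1),
        piK n (gH n ((C (ze n))^(D - d) * homogeneousComponent d qh))
          = (piK n (zv 0))^D * Phi n (inc n (homogeneousComponent d qh)) := by
      intro d hd
      rw [map_mul, map_pow, map_mul, gH, coe_eval₂Hom, eval₂_C, ← coe_eval₂Hom, ← gH, ren_ze]
      rw [map_pow]
      rw [keyH n _ d (homogeneousComponent_isHomogeneous d qh)]
      rw [← mul_assoc, ← pow_add]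
      have hdd := Finset.mem_range.mp hd
      congr 2
      omega
    rw [Finset.sum_congr rfl hterm, ← Finset.mul_sum, ← map_sum (Phi n), ← map_sum (inc n)]
    rw [sum_homogeneousComponent]
    have : inc n qh = chi n p := rfl
    rw [this]
    have := RingHom.congr_fun (Phi_chi n) p
    rw [RingHom.comp_apply] at this
    rw [this]
  have h1 : piK n (gH n qt) = 0 := by rw [hsum, hp, mul_zero]
  have h2 : gH n qt ∈ Ifv n := by
    rw [piK, RingHom.comp_apply] at h1
    have := IsFractionRing.injective (QX n) (KX n) (by simpa using h1)
    exact Ideal.Quotient.eq_zero_iff_mem.mp (by simpa using this)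
  have h3 : rho n (gH n qt) = 0 := by
    have he : eH n (gH n qt) = 0 := eH_I n h2
    have := RingHom.congr_fun (eH_gH n) qt
    rw [RingHom.comp_apply, RingHom.comp_apply] at this
    rw [← this, he]
  have h4 : gH n qt = 0 := rho_inj n (by simpa using h3)
  have h5 : qt = 0 := by
    have := RingHom.congr_fun (hH_gH n) qt
    rw [RingHom.comp_apply, RingHom.id_apply] at this
    rw [← this, h4, map_zero]
  have h6 : ∀ d' ∈ Finset.range (D+1), homogeneousComponent d' qh = 0 := by
    intro d' hd'
    have hcomp := congrArg (homogeneousComponent d') h5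
    rw [map_sum, map_zero] at hcomp
    have hterm : ∀ d ∈ Finset.range (D+1),
        homogeneousComponent d' ((C (ze n))^(D - d) * homogeneousComponent d qh)
          = if d' = d then (C (ze n))^(D - d) * homogeneousComponent d qh else 0 := by
      intro d _
      refine homogeneousComponent_of_mem ((mem_homogeneousSubmodule _ _).mpr ?_)
      have hC : ((C (ze n) : SS0 n)^(D - d)).IsHomogeneous 0 := by
        simpa using (isHomogeneous_C (Fin n) (ze n)).pow (D - d)
      simpa using hC.mul (homogeneousComponent_isHomogeneous d qh)
    rw [Finset.sum_congr rfl hterm] at hcomp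
    rw [Finset.sum_ite_eq (Finset.range (D+1)) d'
      (fun d => (C (ze n))^(D - d) * homogeneousComponent d qh)] at hcomp
    rw [if_pos hd'] at hcomp
    have hCne : ((C (ze n) : SS0 n)^(D - d')) ≠ 0 := by
      apply pow_ne_zero
      intro h
      exact X_ne_zero (Sum.inr () : Sig0 n)
        (C_injective (Fin n) (R0 n) (by rw [map_zero]; exact h))
    rcases mul_eq_zero.mp hcomp with h | h
    · exact absurd h hCne
    · exact h
  have h7 : qh = 0 := by
    rw [← sum_homogeneousComponent qh]
    exact Finset.sum_eq_zero h6
  show chi n p = 0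
  have : chi n p = inc n qh := rfl
  rw [this, h7, map_zero]

theorem main : RingHom.ker (Phi n) = Jid n := by
  refine le_antisymm ?_ (J_le_ker n)
  intro p hp
  have h0 : chi n p = 0 := chi_eq_zero n p (RingHom.mem_ker.mp hp)
  have h1 : p - chi n p ∈ Jid n := sub_chi_mem n p
  rwa [h0, sub_zero] at h1

end Crux
end KerPhiAux


/-- Let `K(X)` be the fraction field of the integral domain `O_X = O_amb/(f_1, …, f_n)` and
`φ : O_amb[T_2, …, T_{n+1}] → K(X)` the ring homomorphism which is the natural projection on
`O_amb` and sends `T_i ↦ z̄_i/z̄_1`.  Then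
`ker φ = (z_i − z_1 T_i (2 ≤ i ≤ n+1), a_{j1} + Σ_k a_{jk} T_k (1 ≤ j ≤ n))`.
Here `T_2, …, T_{n+1}` are indexed by `Fin n` via `i ↦ T_{i+2}`. -/
theorem ker_phi_eq (n : ℕ) (hn : 1 ≤ n)
    [IsDomain (Oamb n ⧸ Ideal.span (Set.range (fun i : Fin n => fv i)))] :
    RingHom.ker
        (eval₂Hom
          ((algebraMap (Oamb n ⧸ Ideal.span (Set.range (fun i : Fin n => fv i)))
              (FractionRing (Oamb n ⧸ Ideal.span (Set.range (fun i : Fin n => fv i))))).comp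
            (Ideal.Quotient.mk (Ideal.span (Set.range (fun i : Fin n => fv i)))))
          (fun k : Fin n =>
            algebraMap _ (FractionRing (Oamb n ⧸ Ideal.span (Set.range (fun i : Fin n => fv i))))
                (Ideal.Quotient.mk (Ideal.span (Set.range (fun i : Fin n => fv i))) (zv k.succ)) /
              algebraMap _ (FractionRing (Oamb n ⧸ Ideal.span (Set.range (fun i : Fin n => fv i))))
                (Ideal.Quotient.mk (Ideal.span (Set.range (fun i : Fin n => fv i))) (zv 0)))
          : MvPolynomial (Fin n) (Oamb n) →+* _)
      = Ideal.span
          ((Set.range fun i : Fin n =>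
              (C (zv i.succ) - C (zv 0) * X i : MvPolynomial (Fin n) (Oamb n))) ∪
           (Set.range fun j : Fin n =>
              (C (av j 0) + ∑ k : Fin n, C (av j k.succ) * X k
                : MvPolynomial (Fin n) (Oamb n)))) := by
  exact KerPhiAux.main n
end

section
/- Fix n ≥ 1. Let O_X = O_amb/(f_1, ..., f_n), an integral domain with fraction field K(X), and let s_i = z̄_i/z̄_1 ∈ K(X) for 2 ≤ i ≤ n+1. Then the O_X-subalgebra O_X[s_2, ..., s_{n+1}] of K(X) (equivalently, the generic type III unprojection ring O_X[I_r^{-1}]) is isomorphic as a ring to a polynomial ring over ℤ in n² + n + 1 variables; in particular it is a Gorenstein ring. -/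
open MvPolynomial

/-
Modulo the relations `f_i = 0`, the entry `a_{i0}` equals `-Σ_k a_{i,k+1} s_{k+1}` in `K(X)`, so
`O_X[s]` is generated over `ℤ` by the `n²` entries `a_{i,k+1}`, the `n` ratios `s_{k+1}` and
`z_0`. These are algebraically independent: the ring map `O_X → ℤ[a, s, z]` sending `a_{i0}` to
`-Σ_k a_{i,k+1} s_{k+1}`, `z_0` to `z` and `z_{k+1}` to `z s_{k+1}` is injective, since followed by
evaluation at the generators it is the inclusion `O_X ⊆ K(X)`. It therefore extends to
`K(X) → Frac ℤ[a, s, z]`, which is a left inverse of the evaluation map.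
-/

namespace Unprojection

variable (n : ℕ)

noncomputable abbrev IX : Ideal (Oamb n) := Ideal.span (Set.range fun i : Fin n => fv i)

noncomputable abbrev OX : Type := Oamb n ⧸ IX n

/-- `X (.inl (i, k))`, `X (.inr (some k))` and `X (.inr none)` stand for `a_{i,k+1}`,
`s_{k+1} = z_{k+1}/z_0` and `z_0` (indices from `0`). -/
abbrev Var : Type := (Fin n × Fin n) ⊕ Option (Fin n)

noncomputable abbrev Poly : Type := MvPolynomial (Var n) ℤ

lemma card_var : Fintype.card (Var n) = n ^ 2 + n + 1 := by
  simp only [Fintype.card_sum, Fintype.card_prod, Fintype.card_option, Fintype.card_fin]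
  ring

-- `f_i = 0` solved for `a_{i0}`, after substituting `z_{k+1} = z_0 s_{k+1}`.
noncomputable def toPolyVar : (Fin n × Fin (n + 1)) ⊕ Fin (n + 1) → Poly n
  | .inl (i, j) =>
    Fin.cases (-∑ k, X (.inl (i, k)) * X (.inr (some k))) (fun k => X (.inl (i, k))) j
  | .inr j => Fin.cases (X (.inr none)) (fun k => X (.inr none) * X (.inr (some k))) j

lemma bind₁_toPolyVar_fv (i : Fin n) : bind₁ (toPolyVar n) (fv i) = 0 := by
  simp only [fv, av, zv, Fin.sum_univ_succ, map_add, map_sum, map_mul, bind₁_X_right, toPolyVar,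
    Fin.cases_zero, Fin.cases_succ, neg_mul, Finset.sum_mul, neg_add_eq_zero]
  exact Finset.sum_congr rfl fun k _ => by ring

noncomputable def toPoly : OX n →+* Poly n :=
  Ideal.Quotient.lift (IX n) (bind₁ (toPolyVar n)).toRingHom fun _ h ↦
    (Ideal.span_le (I := RingHom.ker _)).mpr (Set.range_subset_iff.mpr (bind₁_toPolyVar_fv n)) h

@[simp] lemma toPoly_mk (p : Oamb n) : toPoly n (Ideal.Quotient.mk _ p) = bind₁ (toPolyVar n) p :=
  rfl

lemma mk_zv_zero_ne_zero : Ideal.Quotient.mk (IX n) (zv 0) ≠ 0 := fun h ↦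
  X_ne_zero (R := ℤ) (Sum.inr none : Var n) <| by
    simpa [zv, toPolyVar] using congrArg (toPoly n) h

noncomputable abbrev KX : Type := FractionRing (OX n)

noncomputable abbrev toKX : Oamb n →+* KX n :=
  (algebraMap (OX n) (KX n)).comp (Ideal.Quotient.mk (IX n))

lemma toKX_zv_zero_ne_zero : toKX n (zv 0) ≠ 0 :=
  (map_ne_zero_iff _ (IsFractionRing.injective (OX n) (KX n))).mpr (mk_zv_zero_ne_zero n)

section FractionField

variable [IsDomain (OX n)]

noncomputable def s (k : Fin n) : KX n := toKX n (zv k.succ) / toKX n (zv 0)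

noncomputable def unprojRing : Subalgebra (OX n) (KX n) := Algebra.adjoin (OX n) (Set.range (s n))

noncomputable def unprojGen : Var n → KX n
  | .inl (i, k) => toKX n (av i k.succ)
  | .inr (some k) => s n k
  | .inr none => toKX n (zv 0)

noncomputable def ofPoly : Poly n →ₐ[ℤ] KX n := aeval (unprojGen n)

lemma toKX_av_zero (i : Fin n) : toKX n (av i 0) = -∑ k, toKX n (av i k.succ) * s n k := by
  have hf : toKX n (fv i) = 0 := by
    simp [Ideal.Quotient.eq_zero_iff_mem.mpr (Ideal.subset_span ⟨i, rfl⟩ : fv i ∈ IX n)]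
  rw [fv, map_sum, Fin.sum_univ_succ] at hf
  simp only [map_mul] at hf
  rw [eq_neg_iff_add_eq_zero, ← mul_left_inj' (toKX_zv_zero_ne_zero n), zero_mul, ← hf, add_mul,
    Finset.sum_mul]
  congr 1
  refine Finset.sum_congr rfl fun k _ ↦ ?_
  rw [s, mul_assoc, div_mul_cancel₀ _ (toKX_zv_zero_ne_zero n)]

lemma ofPoly_toPolyVar (v : (Fin n × Fin (n + 1)) ⊕ Fin (n + 1)) :
    ofPoly n (toPolyVar n v) = toKX n (X v) := by
  rcases v with ⟨i, j⟩ | j <;> cases j using Fin.cases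
  · simp only [ofPoly, toPolyVar, Fin.cases_zero, map_neg, map_sum, map_mul, aeval_X, unprojGen]
    exact (toKX_av_zero n i).symm
  · simp [ofPoly, toPolyVar, unprojGen, av]
  · simp [ofPoly, toPolyVar, unprojGen, zv]
  · simp only [ofPoly, toPolyVar, Fin.cases_succ, map_mul, aeval_X, unprojGen, s]
    exact mul_div_cancel₀ _ (toKX_zv_zero_ne_zero n)

lemma ofPoly_toPoly (x : OX n) : ofPoly n (toPoly n x) = algebraMap (OX n) (KX n) x := by
  have h : (ofPoly n : Poly n →+* KX n).comp (toPoly n) = algebraMap (OX n) (KX n) :=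
    Ideal.Quotient.ringHom_ext <|
      ringHom_ext (fun r ↦ by simp) fun v ↦ by simpa using ofPoly_toPolyVar n v
  exact RingHom.congr_fun h x

lemma toPoly_injective : Function.Injective (toPoly n) := fun x y h ↦
  IsFractionRing.injective (OX n) (KX n) (by rw [← ofPoly_toPoly, ← ofPoly_toPoly, h])

noncomputable def liftToPoly : KX n →+* FractionRing (Poly n) :=
  IsFractionRing.lift (g := (algebraMap (Poly n) (FractionRing (Poly n))).comp (toPoly n))
    ((IsFractionRing.injective (Poly n) _).comp (toPoly_injective n))

lemma liftToPoly_algebraMap (x : OX n) :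
    liftToPoly n (algebraMap (OX n) (KX n) x) = algebraMap _ _ (toPoly n x) :=
  IsFractionRing.lift_algebraMap _ _

lemma liftToPoly_comp_ofPoly :
    (liftToPoly n).comp (ofPoly n : Poly n →+* KX n) =
      algebraMap (Poly n) (FractionRing (Poly n)) :=
  ringHom_ext (fun r ↦ by simp) <| by
    rintro (⟨i, k⟩ | _ | k)
    · simp [ofPoly, unprojGen, liftToPoly_algebraMap, toPolyVar, av]
    · simp [ofPoly, unprojGen, liftToPoly_algebraMap, toPolyVar, zv]
    · simp [ofPoly, unprojGen, liftToPoly_algebraMap, toPolyVar, s, zv]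

lemma ofPoly_injective : Function.Injective (ofPoly n) := fun p q h ↦
  IsFractionRing.injective (Poly n) (FractionRing (Poly n)) <| by
    rw [← RingHom.congr_fun (liftToPoly_comp_ofPoly n) p,
      ← RingHom.congr_fun (liftToPoly_comp_ofPoly n) q]
    exact congrArg (liftToPoly n) h

lemma range_ofPoly : (ofPoly n).range = (unprojRing n).restrictScalars ℤ := by
  apply le_antisymm
  · rw [ofPoly, ← Algebra.adjoin_range_eq_range_aeval, Algebra.adjoin_le_iff]
    rintro _ ⟨⟨i, k⟩ | _ | k, rfl⟩ <;> rw [SetLike.mem_coe, Subalgebra.mem_restrictScalars]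
    · exact (unprojRing n).algebraMap_mem (Ideal.Quotient.mk _ (av i k.succ))
    · exact (unprojRing n).algebraMap_mem (Ideal.Quotient.mk _ (zv 0))
    · exact Algebra.subset_adjoin (Set.mem_range_self (f := s n) k)
  · let R : Subalgebra (OX n) (KX n) :=
      { (ofPoly n).range with algebraMap_mem' := fun x ↦ ⟨toPoly n x, ofPoly_toPoly n x⟩ }
    refine (Algebra.adjoin_le (S := R) ?_ : unprojRing n ≤ R)
    rintro _ ⟨k, rfl⟩
    exact ⟨X (.inr (some k)), aeval_X _ _⟩

noncomputable def unprojRingEquivPoly : unprojRing n ≃+* Poly n :=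
  ((Subalgebra.equivOfEq _ _ (range_ofPoly n).symm).trans
    (AlgEquiv.ofInjective (ofPoly n) (ofPoly_injective n)).symm).toRingEquiv

end FractionField

end Unprojection

theorem unprojection_ring_iso_polynomial_ring_general (n : ℕ)
    [IsDomain (Oamb n ⧸ Ideal.span (Set.range (fun i : Fin n => fv i)))] :
    Nonempty
      ((Algebra.adjoin (Oamb n ⧸ Ideal.span (Set.range (fun i : Fin n => fv i)))
          (Set.range fun i : Fin n =>
            algebraMap _ (FractionRing (Oamb n ⧸ Ideal.span (Set.range (fun i : Fin n => fv i))))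
                (Ideal.Quotient.mk (Ideal.span (Set.range (fun i : Fin n => fv i))) (zv i.succ)) /
              algebraMap _ (FractionRing (Oamb n ⧸ Ideal.span (Set.range (fun i : Fin n => fv i))))
                (Ideal.Quotient.mk (Ideal.span (Set.range (fun i : Fin n => fv i))) (zv 0)))
          : Subalgebra _ (FractionRing (Oamb n ⧸ Ideal.span (Set.range (fun i : Fin n => fv i)))))
        ≃+* MvPolynomial (Fin (n^2 + n + 1)) ℤ) :=
  ⟨(Unprojection.unprojRingEquivPoly n).trans
    (renameEquiv ℤ (Fintype.equivFinOfCardEq (Unprojection.card_var n))).toRingEquiv⟩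

/-- The generic type III unprojection ring `O_X[I_r⁻¹] = O_X[s_2, …, s_{n+1}]`, the
`O_X`-subalgebra of `K(X)` generated by `s_i = z̄_i/z̄_1`, is isomorphic as a ring to a
polynomial ring over `ℤ` in `n² + n + 1` variables (in particular it is Gorenstein). -/
theorem unprojection_ring_iso_polynomial_ring (n : ℕ) (hn : 1 ≤ n)
    [IsDomain (Oamb n ⧸ Ideal.span (Set.range (fun i : Fin n => fv i)))] :
    Nonempty
      ((Algebra.adjoin (Oamb n ⧸ Ideal.span (Set.range (fun i : Fin n => fv i)))
          (Set.range fun i : Fin n =>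
            algebraMap _ (FractionRing (Oamb n ⧸ Ideal.span (Set.range (fun i : Fin n => fv i))))
                (Ideal.Quotient.mk (Ideal.span (Set.range (fun i : Fin n => fv i))) (zv i.succ)) /
              algebraMap _ (FractionRing (Oamb n ⧸ Ideal.span (Set.range (fun i : Fin n => fv i))))
                (Ideal.Quotient.mk (Ideal.span (Set.range (fun i : Fin n => fv i))) (zv 0)))
          : Subalgebra _ (FractionRing (Oamb n ⧸ Ideal.span (Set.range (fun i : Fin n => fv i)))))
        ≃+* MvPolynomial (Fin (n^2 + n + 1)) ℤ) :=
  unprojection_ring_iso_polynomial_ring_general n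
end
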